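/- Let β > 0 and 0 < β₁ ≤ β₂ ≤ 1/𝓛, and let B̃ ∈ ℝ^{N×N} be symmetric with β₁ I ⪯ β B̃ ⪯ β₂ I. For any λ ∈ ℝᴺ and x ∈ ℝᴺ, let x⁺ = x − β B̃ ∇_x L̃_α(x, λ). Then L̃_α(x⁺, λ) − L̃_α(x*(λ), λ) ≤ (1 − β₁ μ) [L̃_α(x, λ) − L̃_α(x*(λ), λ)]. -/

import Mathlib

open Matrix Set
open scoped RealInnerProductSpace

noncomputable section

section

open scoped ComplexOrder

/-- The positive semidefinite square root of a positive semidefinite matrix, as defined in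
the older Mathlib (`Matrix.PosSemidef.sqrt`, since removed). -/
def Matrix.PosSemidef.sqrt {n 𝕜 : Type*} [Fintype n] [DecidableEq n] [RCLike 𝕜]
    {A : Matrix n n 𝕜} (hA : A.PosSemidef) : Matrix n n 𝕜 :=
  hA.1.eigenvectorUnitary.1 * diagonal (fun i => ((hA.1.eigenvalues i).sqrt : 𝕜)) *
  (star hA.1.eigenvectorUnitary : Matrix n n 𝕜)

end

/-- The augmented Lagrangian `L̃_α(x, λ) = f(x) + ⟨λ, Z^{1/2} x⟩ + (α/2) xᵀ Z x`,
where `Z^{1/2}` is the positive semidefinite square root of `Z`. -/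
def augLag (N : ℕ) (f : EuclideanSpace ℝ (Fin N) → ℝ) (α : ℝ)
    (Z : Matrix (Fin N) (Fin N) ℝ) (hZ : Z.PosSemidef)
    (x lam : EuclideanSpace ℝ (Fin N)) : ℝ :=
  f x + ⟪lam, Matrix.toEuclideanLin hZ.sqrt x⟫ +
    α / 2 * ⟪x, Matrix.toEuclideanLin Z x⟫

namespace PrimalStepAux

open scoped Pointwise

variable {N : ℕ}
local notation "E" => EuclideanSpace ℝ (Fin N)

lemma sqrt_isHermitian' {M : Matrix (Fin N) (Fin N) ℝ} (hM : M.PosSemidef) :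
    hM.sqrt.IsHermitian := by
  have := Matrix.isHermitian_mul_mul_conjTranspose (hM.1.eigenvectorUnitary : Matrix (Fin N) (Fin N) ℝ)
    (isHermitian_diagonal (fun i => Real.sqrt (hM.1.eigenvalues i)))
  unfold Matrix.PosSemidef.sqrt
  simpa [Matrix.star_eq_conjTranspose] using this

lemma sqrt_mul_self' {M : Matrix (Fin N) (Fin N) ℝ} (hM : M.PosSemidef) :
    hM.sqrt * hM.sqrt = M := by
  unfold Matrix.PosSemidef.sqrt
  have hU : (star hM.1.eigenvectorUnitary : Matrix (Fin N) (Fin N) ℝ) * hM.1.eigenvectorUnitary.1 = 1 :=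
    Unitary.coe_star_mul_self _
  conv_rhs => rw [hM.1.spectral_theorem, Unitary.conjStarAlgAut_apply]
  calc _ = (hM.1.eigenvectorUnitary.1 * (diagonal (fun i => ((hM.1.eigenvalues i).sqrt : ℝ)) *
        ((star hM.1.eigenvectorUnitary : Matrix (Fin N) (Fin N) ℝ) * hM.1.eigenvectorUnitary.1) *
        diagonal (fun i => ((hM.1.eigenvalues i).sqrt : ℝ)))) *
        (star hM.1.eigenvectorUnitary : Matrix (Fin N) (Fin N) ℝ) := by
          simp only [Matrix.mul_assoc]; rfl
    _ = _ := by
      rw [hU, Matrix.mul_one, diagonal_mul_diagonal]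
      congr 3
      funext i
      simp [Real.mul_self_sqrt (hM.eigenvalues_nonneg i)]

lemma inner_toEuc (M : Matrix (Fin N) (Fin N) ℝ) (v w : E) :
    ⟪v, Matrix.toEuclideanLin M w⟫ = dotProduct (v : Fin N → ℝ) (M *ᵥ (w : Fin N → ℝ)) := by
  simp [EuclideanSpace.inner_eq_star_dotProduct, Matrix.ofLp_toEuclideanLin_apply, dotProduct_comm]

lemma psd_inner_nonneg {M : Matrix (Fin N) (Fin N) ℝ} (hM : M.PosSemidef) (v : E) :
    0 ≤ ⟪v, Matrix.toEuclideanLin M v⟫ := by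
  have := hM.dotProduct_mulVec_nonneg (v : Fin N → ℝ)
  simpa [inner_toEuc] using this

lemma herm_inner_symm {M : Matrix (Fin N) (Fin N) ℝ} (hM : M.IsHermitian) (v w : E) :
    ⟪Matrix.toEuclideanLin M v, w⟫ = ⟪v, Matrix.toEuclideanLin M w⟫ :=
  (Matrix.isHermitian_iff_isSymmetric.mp hM) v w

lemma smul_one_sub_psd {M : Matrix (Fin N) (Fin N) ℝ} (hM : M.IsHermitian) (c : ℝ)
    (h : ∀ r ∈ spectrum ℝ M, r ≤ c) :
    (c • (1 : Matrix (Fin N) (Fin N) ℝ) - M).PosSemidef := by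
  have hH : (c • (1 : Matrix (Fin N) (Fin N) ℝ) - M).IsHermitian := by
    refine Matrix.IsHermitian.sub ?_ hM
    simp [Matrix.IsHermitian, Matrix.conjTranspose_smul]
  refine hH.posSemidef_iff_eigenvalues_nonneg.mpr fun i => ?_
  have hmem : hH.eigenvalues i ∈ spectrum ℝ (c • (1 : Matrix (Fin N) (Fin N) ℝ) - M) :=
    hH.eigenvalues_mem_spectrum_real i
  have hs : spectrum ℝ (c • (1 : Matrix (Fin N) (Fin N) ℝ) - M) = ({c} : Set ℝ) - spectrum ℝ M := by
    have hc : c • (1 : Matrix (Fin N) (Fin N) ℝ) = algebraMap ℝ (Matrix (Fin N) (Fin N) ℝ) c :=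
      (Algebra.algebraMap_eq_smul_one c).symm
    rw [hc, ← spectrum.singleton_sub_eq]
  rw [hs] at hmem
  obtain ⟨a, ha, b, hb, hab⟩ := hmem
  simp only [Set.mem_singleton_iff] at ha
  subst ha
  have hb' := h b hb
  rw [← hab]
  simp only [Pi.zero_apply]
  linarith

lemma toEuc_one (v : E) : Matrix.toEuclideanLin (1 : Matrix (Fin N) (Fin N) ℝ) v = v := by
  apply (WithLp.equiv 2 _).injective
  simp [Matrix.ofLp_toEuclideanLin_apply]

lemma toEuc_smul (c : ℝ) (M : Matrix (Fin N) (Fin N) ℝ) (v : E) :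
    Matrix.toEuclideanLin (c • M) v = c • Matrix.toEuclideanLin M v := by
  rw [_root_.map_smul]; rfl

lemma toEuc_sub (A B : Matrix (Fin N) (Fin N) ℝ) (v : E) :
    Matrix.toEuclideanLin (A - B) v = Matrix.toEuclideanLin A v - Matrix.toEuclideanLin B v := by
  rw [_root_.map_sub]; rfl

lemma toEuc_mul (A B : Matrix (Fin N) (Fin N) ℝ) (v : E) :
    Matrix.toEuclideanLin (A * B) v = Matrix.toEuclideanLin A (Matrix.toEuclideanLin B v) := by
  apply (WithLp.equiv 2 _).injective
  simp [Matrix.ofLp_toEuclideanLin_apply, Matrix.mulVec_mulVec]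

lemma quad_ub {M : Matrix (Fin N) (Fin N) ℝ} (hM : M.IsHermitian) {c : ℝ}
    (h : ∀ r ∈ spectrum ℝ M, r ≤ c) (v : E) :
    ⟪v, Matrix.toEuclideanLin M v⟫ ≤ c * ‖v‖ ^ 2 := by
  have h0 := psd_inner_nonneg (smul_one_sub_psd hM c h) v
  rw [toEuc_sub, toEuc_smul, toEuc_one, inner_sub_right, inner_smul_right] at h0
  rw [real_inner_self_eq_norm_sq] at h0
  linarith

lemma form_lb {M : Matrix (Fin N) (Fin N) ℝ} {c : ℝ}
    (h : (M - c • (1 : Matrix (Fin N) (Fin N) ℝ)).PosSemidef) (v : E) :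
    c * ‖v‖ ^ 2 ≤ ⟪v, Matrix.toEuclideanLin M v⟫ := by
  have h0 := psd_inner_nonneg h v
  rw [toEuc_sub, toEuc_smul, toEuc_one, inner_sub_right, inner_smul_right,
    real_inner_self_eq_norm_sq] at h0
  linarith

lemma sq_form_le {M : Matrix (Fin N) (Fin N) ℝ} (hM : M.PosSemidef) {c : ℝ}
    (h : (c • (1 : Matrix (Fin N) (Fin N) ℝ) - M).PosSemidef) (v : E) :
    ‖Matrix.toEuclideanLin M v‖ ^ 2 ≤ c * ⟪v, Matrix.toEuclideanLin M v⟫ := by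
  obtain ⟨K, hKH, hKK⟩ : ∃ K : Matrix (Fin N) (Fin N) ℝ, K.IsHermitian ∧ K * K = M :=
    ⟨hM.sqrt, sqrt_isHermitian' hM, sqrt_mul_self' hM⟩
  have hconj : (Kᴴ * (c • (1 : Matrix (Fin N) (Fin N) ℝ) - M) * K).PosSemidef :=
    h.conjTranspose_mul_mul_same K
  have heq : Kᴴ * (c • (1 : Matrix (Fin N) (Fin N) ℝ) - M) * K = c • M - M * M := by
    rw [hKH.eq]
    rw [Matrix.mul_sub, Matrix.sub_mul, Matrix.mul_smul, Matrix.smul_mul, mul_one, hKK]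
    congr 1
    calc K * M * K = K * (K * K) * K := by rw [hKK]
      _ = (K * K) * (K * K) := by simp only [← mul_assoc]
      _ = M * M := by rw [hKK]
  rw [heq] at hconj
  have h0 := psd_inner_nonneg hconj v
  rw [toEuc_sub, toEuc_smul, toEuc_mul, inner_sub_right, inner_smul_right] at h0
  have hsym : ⟪v, Matrix.toEuclideanLin M (Matrix.toEuclideanLin M v)⟫
      = ‖Matrix.toEuclideanLin M v‖ ^ 2 := by
    rw [← herm_inner_symm hM.isHermitian, real_inner_self_eq_norm_sq]
  rw [hsym] at h0
  linarith

lemma line_hasDerivAt (φ : E → ℝ) (hφ : Differentiable ℝ φ) (x v : E) (t : ℝ) :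
    HasDerivAt (fun s : ℝ => φ (x + s • v)) ⟪gradient φ (x + t • v), v⟫ t := by
  have hc : HasDerivAt (fun s : ℝ => x + s • v) v t := by
    simpa using ((hasDerivAt_id t).smul_const v).const_add x
  have hF := (hφ (x + t • v)).hasGradientAt.hasFDerivAt
  have := hF.comp_hasDerivAt t hc
  simpa [InnerProductSpace.toDual_apply_apply, Function.comp_def] using this

lemma descent_lemma (φ : E → ℝ) (hφ : Differentiable ℝ φ) (Lc : ℝ)
    (hlip : ∀ a b : E, ‖gradient φ a - gradient φ b‖ ≤ Lc * ‖a - b‖) (x v : E) :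
    φ (x + v) ≤ φ x + ⟪gradient φ x, v⟫ + Lc / 2 * ‖v‖ ^ 2 := by
  set η : ℝ → ℝ := fun t => φ (x + t • v) - (t * ⟪gradient φ x, v⟫ + t ^ 2 * (Lc / 2 * ‖v‖ ^ 2))
    with hηdef
  have hη : ∀ t : ℝ, HasDerivAt η
      (⟪gradient φ (x + t • v), v⟫ - (⟪gradient φ x, v⟫ + 2 * t * (Lc / 2 * ‖v‖ ^ 2))) t := by
    intro t
    have h1 := line_hasDerivAt φ hφ x v t
    have h2 : HasDerivAt (fun s : ℝ => s * ⟪gradient φ x, v⟫ + s ^ 2 * (Lc / 2 * ‖v‖ ^ 2))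
        (⟪gradient φ x, v⟫ + 2 * t * (Lc / 2 * ‖v‖ ^ 2)) t := by
      have ha := (hasDerivAt_id t).mul_const (⟪gradient φ x, v⟫)
      have hb := (hasDerivAt_pow 2 t).mul_const (Lc / 2 * ‖v‖ ^ 2)
      simpa [mul_comm, mul_assoc, mul_left_comm] using ha.fun_add hb
    exact h1.sub h2
  have hmono : AntitoneOn η (Icc (0 : ℝ) 1) := by
    apply antitoneOn_of_deriv_nonpos (convex_Icc 0 1)
    · exact fun t _ => ((hη t).differentiableAt.continuousAt).continuousWithinAt
    · exact fun t _ => (hη t).differentiableAt.differentiableWithinAt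
    · intro t ht
      rw [interior_Icc] at ht
      rw [(hη t).deriv]
      have hts : ‖(x + t • v) - x‖ = t * ‖v‖ := by
        rw [add_sub_cancel_left, norm_smul, Real.norm_eq_abs, abs_of_pos ht.1]
      have h1 : ⟪gradient φ (x + t • v) - gradient φ x, v⟫
          ≤ Lc * t * ‖v‖ ^ 2 := by
        calc ⟪gradient φ (x + t • v) - gradient φ x, v⟫
            ≤ ‖gradient φ (x + t • v) - gradient φ x‖ * ‖v‖ := real_inner_le_norm _ _
          _ ≤ (Lc * ‖(x + t • v) - x‖) * ‖v‖ := by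
              have := hlip (x + t • v) x
              exact mul_le_mul_of_nonneg_right this (norm_nonneg _)
          _ = Lc * t * ‖v‖ ^ 2 := by rw [hts]; ring
      rw [inner_sub_left] at h1
      linarith
  have h01 := hmono (Set.left_mem_Icc.mpr zero_le_one) (Set.right_mem_Icc.mpr zero_le_one)
    zero_le_one
  simp only [hηdef, zero_smul, add_zero, one_smul, zero_mul, one_mul, zero_pow, one_pow,
    sub_zero] at h01
  simp only [ne_eq, OfNat.ofNat_ne_zero, not_false_eq_true, zero_pow, zero_mul, add_zero,
    sub_zero] at h01
  linarith

lemma sc_lower (φ : E → ℝ) (hφ : Differentiable ℝ φ) (m : ℝ)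
    (hsc : StrongConvexOn Set.univ m φ) (x y : E) :
    φ x + ⟪gradient φ x, y - x⟫ + m / 2 * ‖y - x‖ ^ 2 ≤ φ y := by
  have hkey : ∀ t : ℝ, t ∈ Set.Ioc (0:ℝ) 1 →
      (φ (x + t • (y - x)) - φ x) / t ≤ φ y - φ x - (1 - t) * (m / 2 * ‖x - y‖ ^ 2) := by
    intro t ht
    have hc := hsc.2 (Set.mem_univ x) (Set.mem_univ y) (by linarith [ht.2] : (0:ℝ) ≤ 1 - t)
      (le_of_lt ht.1) (by ring)
    have hpt : (1 - t) • x + t • y = x + t • (y - x) := by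
      rw [smul_sub, sub_smul, one_smul]; abel
    rw [hpt] at hc
    rw [div_le_iff₀ ht.1]
    have : φ (x + t • (y - x)) ≤ (1 - t) * φ x + t * φ y - (1 - t) * t * (m / 2 * ‖x - y‖ ^ 2) :=
      hc
    nlinarith [this]
  have hslope : Filter.Tendsto (fun t : ℝ => (φ (x + t • (y - x)) - φ x) / t)
      (nhdsWithin 0 (Set.Ioi 0)) (nhds ⟪gradient φ x, y - x⟫) := by
    have hd := line_hasDerivAt φ hφ x (y - x) 0
    simp only [zero_smul, add_zero] at hd
    have hsl := hasDerivAt_iff_tendsto_slope.mp hd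
    have hmono : nhdsWithin (0:ℝ) (Set.Ioi 0) ≤ nhdsWithin (0:ℝ) {(0:ℝ)}ᶜ :=
      nhdsWithin_mono _ (fun t ht => ne_of_gt ht)
    have := hsl.mono_left hmono
    refine this.congr (fun t => ?_)
    simp [slope_def_field, slope, zero_smul, add_zero, inv_mul_eq_div]
  have hrhs : Filter.Tendsto (fun t : ℝ => φ y - φ x - (1 - t) * (m / 2 * ‖x - y‖ ^ 2))
      (nhdsWithin 0 (Set.Ioi 0)) (nhds (φ y - φ x - m / 2 * ‖x - y‖ ^ 2)) := by
    have : Continuous (fun t : ℝ => φ y - φ x - (1 - t) * (m / 2 * ‖x - y‖ ^ 2)) := by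
      continuity
    have h0 := this.tendsto 0
    simp only [sub_zero, one_mul] at h0
    exact h0.mono_left nhdsWithin_le_nhds
  have hev : ∀ᶠ t in nhdsWithin (0:ℝ) (Set.Ioi 0),
      (φ (x + t • (y - x)) - φ x) / t ≤ φ y - φ x - (1 - t) * (m / 2 * ‖x - y‖ ^ 2) := by
    filter_upwards [Ioc_mem_nhdsGT_of_mem (Set.left_mem_Ico.mpr zero_lt_one)] with t ht
    exact hkey t ht
  have hle := le_of_tendsto_of_tendsto hslope hrhs hev
  have hxy : ‖x - y‖ = ‖y - x‖ := norm_sub_rev x y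
  rw [hxy] at hle
  linarith

lemma augLag_hasGradientAt (f : E → ℝ) (hdf : Differentiable ℝ f) (α : ℝ)
    (Z : Matrix (Fin N) (Fin N) ℝ) (hZ : Z.PosSemidef) (lam x : E) :
    HasGradientAt (fun z => augLag N f α Z hZ z lam)
      (gradient f x + Matrix.toEuclideanLin hZ.sqrt lam + α • Matrix.toEuclideanLin Z x) x := by
  set Sc : E →L[ℝ] E := LinearMap.toContinuousLinearMap (Matrix.toEuclideanLin hZ.sqrt) with hSc
  set Tc : E →L[ℝ] E := LinearMap.toContinuousLinearMap (Matrix.toEuclideanLin Z) with hTc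
  have h1 : HasFDerivAt f ((InnerProductSpace.toDual ℝ E) (gradient f x)) x :=
    (hdf x).hasGradientAt.hasFDerivAt
  have h2 : HasFDerivAt (fun z : E => ⟪lam, Matrix.toEuclideanLin hZ.sqrt z⟫)
      ((innerSL ℝ lam).comp Sc) x := ((innerSL ℝ lam).comp Sc).hasFDerivAt
  have hq0 : HasFDerivAt (fun z : E => ⟪z, Matrix.toEuclideanLin Z z⟫)
      ((fderivInnerCLM ℝ ((ContinuousLinearMap.id ℝ E) x, Tc x)).comp
        ((ContinuousLinearMap.id ℝ E).prod Tc)) x :=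
    (hasFDerivAt_id x).inner ℝ (Tc.hasFDerivAt)
  have hq := hq0.const_mul (α / 2)
  have htot := (h1.add h2).add hq
  rw [hasGradientAt_iff_hasFDerivAt]
  have hD : (InnerProductSpace.toDual ℝ E)
      (gradient f x + Matrix.toEuclideanLin hZ.sqrt lam + α • Matrix.toEuclideanLin Z x)
      = ((InnerProductSpace.toDual ℝ E) (gradient f x) + (innerSL ℝ lam).comp Sc)
        + (α / 2) • ((fderivInnerCLM ℝ ((ContinuousLinearMap.id ℝ E) x, Tc x)).comp
          ((ContinuousLinearMap.id ℝ E).prod Tc)) := by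
    apply ContinuousLinearMap.ext
    intro h
    simp only [InnerProductSpace.toDual_apply_apply, ContinuousLinearMap.add_apply,
      ContinuousLinearMap.smul_apply, ContinuousLinearMap.comp_apply, innerSL_apply_apply,
      fderivInnerCLM_apply, ContinuousLinearMap.id_apply, ContinuousLinearMap.prod_apply,
      inner_add_left, inner_smul_left, hSc, hTc, LinearMap.coe_toContinuousLinearMap']
    simp only [RCLike.star_def, conj_trivial, smul_eq_mul]
    have e1 : ⟪Matrix.toEuclideanLin hZ.sqrt lam, h⟫ = ⟪lam, Matrix.toEuclideanLin hZ.sqrt h⟫ :=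
      herm_inner_symm (sqrt_isHermitian' hZ) lam h
    have e2 : ⟪Matrix.toEuclideanLin Z x, h⟫ = ⟪x, Matrix.toEuclideanLin Z h⟫ :=
      herm_inner_symm hZ.isHermitian x h
    have e3 : ⟪h, Matrix.toEuclideanLin Z x⟫ = ⟪Matrix.toEuclideanLin Z x, h⟫ :=
      real_inner_comm _ _
    linear_combination e1 + (α/2) * e2 - (α/2) * e3
  rw [hD]
  exact htot

end PrimalStepAux

set_option maxHeartbeats 1000000 in
open PrimalStepAux in
/-- Lemma 3.6 (single step): if `β₁ I ⪯ β B̃ ⪯ β₂ I ⪯ (1/𝓛) I`, then one quasi-Newton step contracts the primal optimality gap by the factor `1 − β₁ μ`. -/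
theorem primal_step_contraction
    (N : ℕ) (hN : 0 < N)
    (f : EuclideanSpace ℝ (Fin N) → ℝ) (μ L : ℝ) (hμ : 0 < μ) (hL : 0 < L)
    (hf : ContDiff ℝ 2 f)
    (hsc : StrongConvexOn Set.univ μ f)
    (hlip : LipschitzWith L.toNNReal (gradient f))
    (Z : Matrix (Fin N) (Fin N) ℝ) (hZ : Z.PosSemidef) (hZ0 : Z ≠ 0)
    (ρ σ : ℝ)
    (hρ : ρ ∈ spectrum ℝ Z) (hρmax : ∀ c ∈ spectrum ℝ Z, c ≤ ρ)
    (hσ : σ ∈ spectrum ℝ Z) (hσpos : 0 < σ) (hσmin : ∀ c ∈ spectrum ℝ Z, 0 < c → σ ≤ c)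
    (α : ℝ) (hα : 0 < α)
    (xstar : EuclideanSpace ℝ (Fin N) → EuclideanSpace ℝ (Fin N))
    (hxstar : ∀ lam, IsMinOn (fun x => augLag N f α Z hZ x lam) Set.univ (xstar lam))
    (β β₁ β₂ : ℝ) (hβ : 0 < β) (hβ₁ : 0 < β₁) (hβ₁₂ : β₁ ≤ β₂)
    (hβ₂ : β₂ ≤ 1 / (L + ρ * α))
    (Bt : Matrix (Fin N) (Fin N) ℝ) (hBt : Bt.IsHermitian)
    (hBtlow : (β • Bt - β₁ • (1 : Matrix (Fin N) (Fin N) ℝ)).PosSemidef)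
    (hBtup : (β₂ • (1 : Matrix (Fin N) (Fin N) ℝ) - β • Bt).PosSemidef)
    :
    ∀ (lam x : EuclideanSpace ℝ (Fin N)),
      augLag N f α Z hZ
          (x - β • Matrix.toEuclideanLin Bt (gradient (fun z => augLag N f α Z hZ z lam) x)) lam -
        augLag N f α Z hZ (xstar lam) lam ≤
      (1 - β₁ * μ) * (augLag N f α Z hZ x lam - augLag N f α Z hZ (xstar lam) lam) := by
  intro lam x
  have hdf : Differentiable ℝ f := hf.differentiable (by norm_num)
  set g : EuclideanSpace ℝ (Fin N) → ℝ := fun z => augLag N f α Z hZ z lam with hgdef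
  set G : EuclideanSpace ℝ (Fin N) := gradient g x with hGdef
  have hgG : G = gradient f x + Matrix.toEuclideanLin hZ.sqrt lam
      + α • Matrix.toEuclideanLin Z x :=
    (augLag_hasGradientAt f hdf α Z hZ lam x).gradient
  have hliplem : ∀ a b : EuclideanSpace ℝ (Fin N),
      ‖gradient f a - gradient f b‖ ≤ L * ‖a - b‖ := by
    intro a b
    have := hlip.dist_le_mul a b
    rwa [dist_eq_norm, dist_eq_norm, Real.coe_toNNReal L hL.le] at this
  -- inner product of G with any v
  have hGv : ∀ v : EuclideanSpace ℝ (Fin N), ⟪G, v⟫ = ⟪gradient f x, v⟫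
      + ⟪Matrix.toEuclideanLin hZ.sqrt lam, v⟫ + α * ⟪Matrix.toEuclideanLin Z x, v⟫ := by
    intro v
    rw [hgG, inner_add_left, inner_add_left, real_inner_smul_left]
  -- expansion of the augmented Lagrangian
  have hexp : ∀ v : EuclideanSpace ℝ (Fin N), g (x + v) = f (x + v)
      + (⟪lam, Matrix.toEuclideanLin hZ.sqrt x⟫ + ⟪Matrix.toEuclideanLin hZ.sqrt lam, v⟫)
      + α / 2 * (⟪x, Matrix.toEuclideanLin Z x⟫ + 2 * ⟪Matrix.toEuclideanLin Z x, v⟫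
        + ⟪v, Matrix.toEuclideanLin Z v⟫) := by
    intro v
    simp only [hgdef, augLag]
    rw [_root_.map_add, _root_.map_add, inner_add_right, inner_add_left, inner_add_right,
      inner_add_right]
    rw [herm_inner_symm (sqrt_isHermitian' hZ) lam v]
    have e2 : ⟪Matrix.toEuclideanLin Z x, v⟫ = ⟪x, Matrix.toEuclideanLin Z v⟫ :=
      herm_inner_symm hZ.isHermitian x v
    have e3 : ⟪v, Matrix.toEuclideanLin Z x⟫ = ⟪Matrix.toEuclideanLin Z x, v⟫ :=
      real_inner_comm _ _
    ring_nf
    linear_combination (α/2) * e3 - (α/2) * e2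
  -- (A) descent inequality for g
  have hA : ∀ v : EuclideanSpace ℝ (Fin N),
      g (x + v) ≤ g x + ⟪G, v⟫ + (L + ρ * α) / 2 * ‖v‖ ^ 2 := by
    intro v
    have hfd := descent_lemma f hdf L hliplem x v
    have hqv : ⟪v, Matrix.toEuclideanLin Z v⟫ ≤ ρ * ‖v‖ ^ 2 :=
      quad_ub hZ.isHermitian hρmax v
    have hqv' := mul_le_mul_of_nonneg_left hqv (by positivity : (0:ℝ) ≤ α / 2)
    have hx0 : g x = f x + ⟪lam, Matrix.toEuclideanLin hZ.sqrt x⟫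
        + α / 2 * ⟪x, Matrix.toEuclideanLin Z x⟫ := rfl
    rw [hexp v, hGv v, hx0]
    nlinarith [hfd, hqv']
  -- (B) strong convexity lower bound for g
  have hB : ∀ v : EuclideanSpace ℝ (Fin N),
      g x + ⟪G, v⟫ + μ / 2 * ‖v‖ ^ 2 ≤ g (x + v) := by
    intro v
    have hfl := sc_lower f hdf μ hsc x (x + v)
    rw [add_sub_cancel_left] at hfl
    have hpsd : 0 ≤ ⟪v, Matrix.toEuclideanLin Z v⟫ := psd_inner_nonneg hZ v
    have hx0 : g x = f x + ⟪lam, Matrix.toEuclideanLin hZ.sqrt x⟫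
        + α / 2 * ⟪x, Matrix.toEuclideanLin Z x⟫ := rfl
    rw [hexp v, hGv v, hx0]
    nlinarith [hfl, hpsd, mul_le_mul_of_nonneg_left hpsd (by positivity : (0:ℝ) ≤ α / 2)]
  -- (C) PL-type inequality
  have hPL : 2 * μ * (g x - g (xstar lam)) ≤ ‖G‖ ^ 2 := by
    have hv := hB (xstar lam - x)
    rw [add_sub_cancel] at hv
    have hip : -(‖G‖ * ‖xstar lam - x‖) ≤ ⟪G, xstar lam - x⟫ :=
      neg_le_of_neg_le (by
        have := abs_real_inner_le_norm G (xstar lam - x)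
        have h2 := neg_abs_le (⟪G, xstar lam - x⟫)
        linarith)
    have hkey : g x - g (xstar lam) ≤ ‖G‖ * ‖xstar lam - x‖ - μ / 2 * ‖xstar lam - x‖ ^ 2 := by
      linarith
    have hmul := mul_le_mul_of_nonneg_left hkey (by positivity : (0:ℝ) ≤ 2 * μ)
    nlinarith [sq_nonneg (‖G‖ - μ * ‖xstar lam - x‖)]
  -- matrix step facts
  set P : Matrix (Fin N) (Fin N) ℝ := β • Bt with hPdef
  have hPherm : P.IsHermitian := by
    show Pᴴ = P
    rw [hPdef, Matrix.conjTranspose_smul, hBt.eq, star_trivial]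
  have hPpsd : P.PosSemidef := by
    have hPe : P = (β • Bt - β₁ • (1 : Matrix (Fin N) (Fin N) ℝ)) + β₁ • 1 := by
      rw [sub_add_cancel]
    rw [hPe]
    exact hBtlow.add (Matrix.PosSemidef.one.smul hβ₁.le)
  set w : EuclideanSpace ℝ (Fin N) := Matrix.toEuclideanLin P G with hwdef
  have hw' : w = β • Matrix.toEuclideanLin Bt G := by
    rw [hwdef, hPdef, toEuc_smul]
  set q : ℝ := ⟪G, w⟫ with hqdef
  have hq1 : β₁ * ‖G‖ ^ 2 ≤ q := form_lb hBtlow G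
  have hq2 : ‖w‖ ^ 2 ≤ β₂ * q := sq_form_le hPpsd hBtup G
  have hq0 : (0:ℝ) ≤ q := le_trans (mul_nonneg hβ₁.le (sq_nonneg _)) hq1
  have hρσ : σ ≤ ρ := hρmax σ hσ
  have hρpos : (0:ℝ) < ρ := lt_of_lt_of_le hσpos hρσ
  have hLρ : (0:ℝ) < L + ρ * α := by
    have := mul_pos hρpos hα
    linarith
  have h𝓛β₂ : β₂ * (L + ρ * α) ≤ 1 := by
    rw [← le_div_iff₀ hLρ]; exact hβ₂
  -- (D) one step decrease
  have hstep : g (x + (-w)) ≤ g x - β₁ / 2 * ‖G‖ ^ 2 := by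
    have h1 := hA (-w)
    rw [inner_neg_right, norm_neg] at h1
    have h2 := mul_le_mul_of_nonneg_left hq2 (by positivity : (0:ℝ) ≤ (L + ρ * α) / 2)
    have h3 : (L + ρ * α) / 2 * (β₂ * q) ≤ q / 2 := by nlinarith
    linarith
  -- conclusion
  have hxw : x - β • Matrix.toEuclideanLin Bt (gradient g x) = x + (-w) := by
    rw [hw', ← hGdef, sub_eq_add_neg]
  have hmul := mul_le_mul_of_nonneg_left hPL (by positivity : (0:ℝ) ≤ β₁ / 2)
  calc g (x - β • Matrix.toEuclideanLin Bt (gradient g x)) - g (xstar lam)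
      = g (x + (-w)) - g (xstar lam) := by rw [hxw]
    _ ≤ g x - β₁ / 2 * ‖G‖ ^ 2 - g (xstar lam) := by linarith
    _ ≤ (1 - β₁ * μ) * (g x - g (xstar lam)) := by nlinarith
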